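/- Let H ∈ M_d(ℂ) be Hermitian and α > 0 a real number, and define the linear map F : M_d(ℂ) → M_d(ℂ) by F(ρ) = ρ + (i/α)(Hρ − ρH). Then F is completely positive if and only if H is a scalar multiple of the identity matrix (in which case F is the identity map). -/

import Mathlib

open scoped Kronecker ComplexOrder Matrix

noncomputable section

/-- The Choi matrix of a linear map between matrix algebras. -/
def choi {ι κ : Type*} [Fintype ι] [DecidableEq ι] [Fintype κ]
    (E : Matrix ι ι ℂ →ₗ[ℂ] Matrix κ κ ℂ) : Matrix (ι × κ) (ι × κ) ℂ :=
  ∑ i : ι, ∑ j : ι, Matrix.single i j (1 : ℂ) ⊗ₖ E (Matrix.single i j 1)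

/-- A quantum channel: completely positive (positive semidefinite Choi matrix) and
trace preserving. -/
def IsCPTP {ι κ : Type*} [Fintype ι] [DecidableEq ι] [Fintype κ]
    (E : Matrix ι ι ℂ →ₗ[ℂ] Matrix κ κ ℂ) : Prop :=
  (choi E).PosSemidef ∧ ∀ X, (E X).trace = X.trace

/-- A density matrix: positive semidefinite with unit trace. -/
def IsDensityMatrix {ι : Type*} [Fintype ι] (ρ : Matrix ι ι ℂ) : Prop :=
  ρ.PosSemidef ∧ ρ.trace = 1

/-- The exponential `e^L` of a superoperator `L`, taken in the algebra of linear
endomorphisms of the matrix space (computed via the matrix exponential in the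
standard basis of the matrix space). -/
def expL {ι : Type*} [Fintype ι] [DecidableEq ι]
    (L : Matrix ι ι ℂ →ₗ[ℂ] Matrix ι ι ℂ) : Matrix ι ι ℂ →ₗ[ℂ] Matrix ι ι ℂ :=
  Matrix.toLin (Matrix.stdBasis ℂ ι ι) (Matrix.stdBasis ℂ ι ι)
    (NormedSpace.exp (LinearMap.toMatrix (Matrix.stdBasis ℂ ι ι) (Matrix.stdBasis ℂ ι ι) L))

/-- A Lindbladian: `L(ρ) = -i[H,ρ] + Σ_j γ_j (A_j ρ A_j† - ½{A_j†A_j, ρ})` with `H`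
Hermitian and rates `γ_j ≥ 0`. -/
def IsLindbladian {ι : Type*} [Fintype ι] [DecidableEq ι]
    (L : Matrix ι ι ℂ →ₗ[ℂ] Matrix ι ι ℂ) : Prop :=
  ∃ (J : ℕ) (H : Matrix ι ι ℂ) (γ : Fin J → ℝ) (A : Fin J → Matrix ι ι ℂ),
    H.IsHermitian ∧ (∀ j, 0 ≤ γ j) ∧
    ∀ ρ, L ρ = -(Complex.I) • (H * ρ - ρ * H) +
      ∑ j, (γ j : ℂ) •
        (A j * ρ * (A j)ᴴ - (2⁻¹ : ℂ) • ((A j)ᴴ * A j * ρ + ρ * ((A j)ᴴ * A j)))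

/-- `L` is quantum programmable: there are a finite-dimensional program register, a fixed
quantum channel `P`, and a continuous family of program (density) states `π t` such that
`P (X ⊗ π t) = e^{tL} X` for all `t ≥ 0`. -/
def QuantumProgrammable {ι : Type*} [Fintype ι] [DecidableEq ι]
    (L : Matrix ι ι ℂ →ₗ[ℂ] Matrix ι ι ℂ) : Prop :=
  ∃ dP : ℕ, 1 ≤ dP ∧
    ∃ (P : Matrix (ι × Fin dP) (ι × Fin dP) ℂ →ₗ[ℂ] Matrix ι ι ℂ)
      (π : ℝ → Matrix (Fin dP) (Fin dP) ℂ),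
      IsCPTP P ∧ ContinuousOn π (Set.Ici 0) ∧
      (∀ t : ℝ, 0 ≤ t → IsDensityMatrix (π t)) ∧
      ∀ t : ℝ, 0 ≤ t → ∀ X, P (X ⊗ₖ π t) = expL ((t : ℂ) • L) X

open Matrix

lemma quad_nonneg {n : Type*} [Fintype n] [DecidableEq n] {M : Matrix n n ℂ}
    (hM : M.PosSemidef) (u v : n) (c₁ c₂ : ℂ) :
    0 ≤ star c₁ * M u u * c₁ + star c₁ * M u v * c₂ +
        star c₂ * M v u * c₁ + star c₂ * M v v * c₂ := by
  have h := hM.dotProduct_mulVec_nonneg (Pi.single u c₁ + Pi.single v c₂)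
  rw [star_add, ← Pi.single_star, ← Pi.single_star, mulVec_add, dotProduct_add,
    add_dotProduct, add_dotProduct] at h
  simp only [mulVec_single, single_dotProduct, Pi.smul_apply, op_smul_eq_mul, col_apply] at h
  convert h using 1
  ring

lemma choi_apply' {ι κ : Type*} [Fintype ι] [DecidableEq ι] [Fintype κ]
    (E : Matrix ι ι ℂ →ₗ[ℂ] Matrix κ κ ℂ) (a c : ι) (b e : κ) :
    choi E (a, b) (c, e) = E (Matrix.single a c 1) b e := by
  simp [choi, Matrix.sum_apply, Matrix.single, ite_and, ite_mul,
    Finset.sum_ite_eq, Finset.sum_ite_eq']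

lemma choi_entry {d : ℕ} (H : Matrix (Fin d) (Fin d) ℂ) (α : ℝ)
    (F : Matrix (Fin d) (Fin d) ℂ →ₗ[ℂ] Matrix (Fin d) (Fin d) ℂ)
    (hF : ∀ ρ, F ρ = ρ + (Complex.I / (α : ℂ)) • (H * ρ - ρ * H))
    (a b c e : Fin d) :
    choi F (a, b) (c, e) = (if a = b ∧ c = e then 1 else 0) +
      (Complex.I / (α : ℂ)) *
        ((if c = e then H b a else 0) - (if a = b then H c e else 0)) := by
  have h1 : Matrix.single a c (1 : ℂ) b e = if a = b ∧ c = e then 1 else 0 := rfl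
  have h2 : (H * Matrix.single a c (1 : ℂ)) b e = if c = e then H b a else 0 := by
    by_cases hce : c = e
    · subst hce; rw [Matrix.mul_single_apply_same]; simp
    · rw [Matrix.mul_single_apply_of_ne _ _ _ _ _ (Ne.symm hce)]
      simp [hce]
  have h3 : (Matrix.single a c (1 : ℂ) * H) b e = if a = b then H c e else 0 := by
    by_cases hab : a = b
    · subst hab; rw [Matrix.single_mul_apply_same]; simp
    · rw [Matrix.single_mul_apply_of_ne 1 a c b e (Ne.symm hab)]
      simp [hab]
  rw [choi_apply', hF, Matrix.add_apply, Matrix.smul_apply, Matrix.sub_apply, h1, h2, h3]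
  simp [smul_eq_mul]

/-- for Hermitian `H` and `α > 0`, the map `F(ρ) = ρ + (i/α)(Hρ − ρH)` is
completely positive iff `H` is a scalar multiple of the identity. -/
theorem identity_plus_commutator_cp_iff_scalar
    {d : ℕ} (H : Matrix (Fin d) (Fin d) ℂ) (hH : H.IsHermitian)
    (α : ℝ) (hα : 0 < α)
    (F : Matrix (Fin d) (Fin d) ℂ →ₗ[ℂ] Matrix (Fin d) (Fin d) ℂ)
    (hF : ∀ ρ, F ρ = ρ + (Complex.I / (α : ℂ)) • (H * ρ - ρ * H)) :
    (choi F).PosSemidef ↔ ∃ c : ℂ, H = c • (1 : Matrix (Fin d) (Fin d) ℂ) := by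
  have key := choi_entry H α F hF
  have hαC : (α : ℂ) ≠ 0 := by exact_mod_cast hα.ne'
  have hIα : Complex.I / (α : ℂ) ≠ 0 := div_ne_zero Complex.I_ne_zero hαC
  constructor
  · intro hPSD
    -- off-diagonal entries of H vanish
    have hoff : ∀ p q : Fin d, p ≠ q → H q p = 0 := by
      intro p q hpq
      by_contra hz0
      set z : ℂ := Complex.I / (α : ℂ) * H q p with hzdef
      have hz : z ≠ 0 := mul_ne_zero hIα hz0
      have hsz : star z ≠ 0 := star_ne_zero.mpr hz
      have h := quad_nonneg hPSD (p, q) (p, p) (-(star z)⁻¹) 1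
      rw [key p q p q, key p q p p, key p p p q, key p p p p] at h
      simp only [hpq, if_neg, if_pos, and_self, ite_true, ite_false, if_neg hpq,
        and_false, false_and] at h
      have hHer : star (H q p) = H p q := hH.apply p q
      have hstz : star z = -(Complex.I / (α:ℂ)) * H p q := by
        rw [hzdef]
        simp only [star_mul', ← hHer]
        congr 1
        simp [star_div₀, Complex.star_def, Complex.conj_I, Complex.conj_ofReal, neg_div]
      have e1 : (0:ℂ) + Complex.I/(α:ℂ) * (0-0) = 0 := by ring
      have e2 : (0:ℂ) + Complex.I/(α:ℂ) * (H q p - 0) = z := by rw [hzdef]; ring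
      have e3 : (0:ℂ) + Complex.I/(α:ℂ) * (0 - H p q) = star z := by rw [hstz]; ring
      have e4 : (1:ℂ) + Complex.I/(α:ℂ) * (H p p - H p p) = 1 := by ring
      rw [e1, e2, e3, e4] at h
      have hA : z⁻¹ * z = 1 := inv_mul_cancel₀ hz
      have hB : star z * (star z)⁻¹ = 1 := mul_inv_cancel₀ hsz
      have hcalc : star (-(star z)⁻¹) * (0:ℂ) * (-(star z)⁻¹) +
          star (-(star z)⁻¹) * z * 1 + star (1:ℂ) * star z * (-(star z)⁻¹) +
          star (1:ℂ) * 1 * 1 = -1 := by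
        rw [star_neg, star_inv₀, star_star, star_one]
        calc -z⁻¹ * (0:ℂ) * (-(star z)⁻¹) + -z⁻¹ * z * 1 + 1 * star z * (-(star z)⁻¹) + 1*1*1
            = -(z⁻¹ * z) - star z * (star z)⁻¹ + 1 := by ring
          _ = -1 := by rw [hA, hB]; ring
      rw [hcalc] at h
      exact absurd h (by norm_num [Complex.le_def])
    -- diagonal entries of H are all equal
    have hdiag : ∀ p q : Fin d, H p p = H q q := by
      intro p q
      by_cases hpq : p = q
      · rw [hpq]
      · obtain ⟨r, hr⟩ := Complex.conj_eq_iff_real.mp (hH.apply p p)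
        obtain ⟨s, hs⟩ := Complex.conj_eq_iff_real.mp (hH.apply q q)
        set m : ℂ := 1 + Complex.I / (α : ℂ) * (H p p - H q q) with hmdef
        have h := quad_nonneg hPSD (p, p) (q, q) 1 (-(star m))
        rw [key p p p p, key p p q q, key q q p p, key q q q q] at h
        simp only [if_pos, and_self, ite_true] at h
        have hmstar : star m = 1 + Complex.I / (α : ℂ) * (H q q - H p p) := by
          rw [hmdef, hr, hs]
          simp only [star_add, star_one, star_mul']
          rw [star_div₀, Complex.star_def, Complex.conj_I, Complex.conj_ofReal]
          ring_nf
          simp [Complex.star_def, map_sub, Complex.conj_ofReal]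
          ring
        have hcalc : star (1:ℂ) * ((1:ℂ) + Complex.I/(α:ℂ) * (H p p - H p p)) * 1 +
            star (1:ℂ) * ((1:ℂ) + Complex.I/(α:ℂ) * (H p p - H q q)) * (-(star m)) +
            star (-(star m)) * ((1:ℂ) + Complex.I/(α:ℂ) * (H q q - H p p)) * 1 +
            star (-(star m)) * ((1:ℂ) + Complex.I/(α:ℂ) * (H q q - H q q)) * (-(star m))
            = ((-(((r - s)^2) / α^2) : ℝ) : ℂ) := by
          rw [star_neg, star_star, hmstar, hmdef, hr, hs, star_one]
          have hI2 : Complex.I ^ 2 = -1 := Complex.I_sq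
          push_cast
          field_simp
          ring_nf
          rw [hI2]
          ring
        rw [hcalc] at h
        have hreal : (0:ℝ) ≤ -(((r - s)^2) / α^2) := Complex.zero_le_real.mp h
        have ht : ((r - s)^2) / α^2 ≤ 0 := by linarith
        have hle : (r - s)^2 ≤ 0 := by
          have : (r - s)^2 = ((r - s)^2 / α^2) * α^2 := by field_simp
          rw [this]
          exact mul_nonpos_of_nonpos_of_nonneg ht (sq_nonneg α)
        have : r = s := by nlinarith [sq_nonneg (r - s)]
        rw [hr, hs, this]
    rcases Nat.eq_zero_or_pos d with hd | hd
    · subst hd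
      exact ⟨0, by ext i j; exact i.elim0⟩
    · refine ⟨H ⟨0, hd⟩ ⟨0, hd⟩, ?_⟩
      ext p q
      by_cases hpq : p = q
      · subst hpq
        simp [Matrix.one_apply, hdiag p ⟨0, hd⟩]
      · simp [Matrix.one_apply, hpq, hoff q p (Ne.symm hpq)]
  · rintro ⟨c, hc⟩
    have hFid : ∀ ρ, F ρ = ρ := by
      intro ρ
      rw [hF, hc]
      simp [Matrix.smul_mul, Matrix.mul_smul]
    set v : Fin d × Fin d → ℂ := fun w => if w.1 = w.2 then 1 else 0 with hv
    have hchoi : choi F = (Matrix.replicateRow Unit v)ᴴ * Matrix.replicateRow Unit v := by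
      ext ⟨a, b⟩ ⟨c', e⟩
      rw [choi_apply', hFid]
      simp only [Matrix.mul_apply, Matrix.conjTranspose_apply, Matrix.replicateRow_apply, hv,
        Finset.univ_unique, Finset.sum_singleton]
      by_cases hab : a = b <;> by_cases hce : c' = e <;>
        simp [Matrix.single, hab, hce]
    rw [hchoi]
    exact Matrix.posSemidef_conjTranspose_mul_self _
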